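/- In an implicative-orthomodular lattice X, x commutes with y if and only if x ⊓ y = y ⊓ x. -/
import Mathlib


class InvBE (X : Type*) where
  imp : X → X → X
  one : X
  zero : X
  imp_self : ∀ x, imp x x = one
  imp_one : ∀ x, imp x one = one
  one_imp : ∀ x, imp one x = x
  exch : ∀ x y z, imp x (imp y z) = imp y (imp x z)
  zero_imp : ∀ x, imp zero x = one
  invol : ∀ x, imp (imp x zero) zero = x

namespace InvBE

variable {X : Type*} [InvBE X]

/-- `x* = x → 0` -/
def star (x : X) : X := imp x zero

/-- `x ⊔ y = (x → y) → y` -/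
def sup (x y : X) : X := imp (imp x y) y

/-- `x ⊓ y = ((x* → y*) → y*)*` -/
def inf (x y : X) : X := star (imp (imp (star x) (star y)) (star y))

/-- `x ≤_L y` iff `x = (x → y*)*` -/
def leL (x y : X) : Prop := x = star (imp x (star y))

/-- `x ≤_Q y` iff `x = x ⊓ y` -/
def leQ (x y : X) : Prop := x = inf x y

/-- `x C y` iff `x = (x → y*) → (x → y)*` -/
def Comm (x y : X) : Prop := x = imp (imp x (star y)) (star (imp x y))

/-- divisibility condition for the pair `(x, y)`: `x → (x → y)* = x → y*` -/
def Idiv (x y : X) : Prop := imp x (star (imp x y)) = imp x (star y)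

/-- `Idis₁`: `((x* → y) → z*)* = (x → z*) → (y → z*)*` -/
def Idis1 (x y z : X) : Prop :=
  star (imp (imp (star x) y) (star z)) = imp (imp x (star z)) (star (imp y (star z)))

/-- `Idis₂`: `((x → y*) → z)* = (z* → x) → (z* → y)*` -/
def Idis2 (x y z : X) : Prop :=
  star (imp (imp x (star y)) z) = imp (imp (star z) x) (star (imp (star z) y))

/-- a triple is distributive if all its permutations satisfy `Idis₁` and `Idis₂` -/
def DistribTriple (x y z : X) : Prop :=
  Idis1 x y z ∧ Idis1 x z y ∧ Idis1 y x z ∧ Idis1 y z x ∧ Idis1 z x y ∧ Idis1 z y x ∧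
  Idis2 x y z ∧ Idis2 x z y ∧ Idis2 y x z ∧ Idis2 y z x ∧ Idis2 z x y ∧ Idis2 z y x

end InvBE

/-- implicative involutive BE algebra: `(x → y) → x = x` -/
class ImplInvBE (X : Type*) extends InvBE X where
  impl : ∀ x y, imp (imp x y) x = x

/-- implicative-orthomodular lattice: `x ⊓ (y → x) = x` -/
class IOML (X : Type*) extends ImplInvBE X where
  iom : ∀ x y, InvBE.inf x (imp y x) = x

open InvBE

section Aux

namespace IOMLAux

open InvBE

variable {X : Type*}

section Impl
variable [ImplInvBE X]

lemma ss (x : X) : star (star x) = x := InvBE.invol x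

lemma contrap (x y : X) : imp x y = imp (star y) (star x) := by
  have h : imp (star y) (star x) = imp x (star (star y)) := by
    unfold InvBE.star; rw [InvBE.exch]
  rw [h, ss]

lemma sI (x : X) : imp (star x) x = x := ImplInvBE.impl x InvBE.zero

/-- join -/
def jn (x y : X) : X := imp (star x) y

/-- meet -/
def mt (x y : X) : X := star (jn (star x) (star y))

/-- order -/
def ple (x y : X) : Prop := jn x y = y

lemma jn_comm (x y : X) : jn x y = jn y x := by
  unfold jn
  rw [contrap (star x) y, ss]

lemma jn_exch (x y z : X) : jn x (jn y z) = jn y (jn x z) := by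
  unfold jn; rw [InvBE.exch]

lemma jn_idem (x : X) : jn x x = x := sI x

lemma jn_assoc (x y z : X) : jn (jn x y) z = jn x (jn y z) := by
  rw [jn_comm, jn_exch, jn_comm z y, ← jn_exch]

lemma ple_refl (x : X) : ple x x := jn_idem x

lemma ple_trans {x y z : X} (h1 : ple x y) (h2 : ple y z) : ple x z := by
  unfold ple at *
  rw [← h2, ← jn_assoc, h1]

lemma ple_antisymm {x y : X} (h1 : ple x y) (h2 : ple y x) : x = y := by
  unfold ple at *
  rw [← h1, jn_comm, h2]

lemma ple_jn_left (x y : X) : ple x (jn x y) := by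
  unfold ple
  rw [← jn_assoc, jn_idem]

lemma ple_jn_right (x y : X) : ple y (jn x y) := by
  rw [jn_comm]; exact ple_jn_left y x

lemma jn_lub {x y z : X} (h1 : ple x z) (h2 : ple y z) : ple (jn x y) z := by
  unfold ple at *
  rw [jn_assoc, h2, h1]

lemma jn_mono_right {u v : X} (w : X) (h : ple u v) : ple (jn w u) (jn w v) := by
  unfold ple at *
  rw [jn_assoc, jn_exch u w, ← jn_assoc, jn_idem, h]

lemma ple_antitone {x y : X} (h : ple x y) : ple (star y) (star x) := by
  unfold ple at *
  unfold jn at *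
  rw [ss]
  have hy : imp (InvBE.star x) y = y := h
  calc imp y (InvBE.star x) = imp (imp (InvBE.star x) y) (InvBE.star x) := by rw [hy]
    _ = InvBE.star x := ImplInvBE.impl (InvBE.star x) y

lemma ple_of_star {x y : X} (h : ple (star x) (star y)) : ple y x := by
  have := ple_antitone h
  rwa [ss, ss] at this

lemma mt_comm (x y : X) : mt x y = mt y x := by
  unfold mt; rw [jn_comm]

lemma star_mt (x y : X) : star (mt x y) = jn (star x) (star y) := by
  unfold mt; rw [ss]

lemma star_jn (x y : X) : star (jn x y) = mt (star x) (star y) := by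
  unfold mt; rw [ss, ss]

lemma ple_mt_left (x y : X) : ple (mt x y) x := by
  apply ple_of_star
  rw [star_mt]
  exact ple_jn_left (star x) (star y)

lemma ple_mt_right (x y : X) : ple (mt x y) y := by
  rw [mt_comm]; exact ple_mt_left y x

lemma mt_glb {x y z : X} (h1 : ple z x) (h2 : ple z y) : ple z (mt x y) := by
  have := jn_lub (ple_antitone h1) (ple_antitone h2)
  have h3 := ple_antitone this
  rwa [ss, star_jn, ss, ss] at h3

lemma mt_mono_right {u v : X} (w : X) (h : ple u v) : ple (mt w u) (mt w v) :=
  mt_glb (ple_mt_left w u) (ple_trans (ple_mt_right w u) h)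

end Impl

section Ioml
variable [IOML X]

lemma inf_eq (x y : X) : inf x y = mt (jn x (star y)) y := by
  unfold inf mt jn
  simp only [ss]

lemma comm_iff (x y : X) : Comm x y ↔ x = jn (mt x y) (mt x (star y)) := by
  unfold Comm mt jn
  simp only [ss]

/-- orthomodularity, projection form: `x ≤ z → (x ∨ z*) ∧ z = x` -/
lemma om1 {x z : X} (h : ple x z) : mt (jn x (star z)) z = x := by
  have hz : imp (star z) x = z := by
    rw [contrap, ss]; exact h
  have := IOML.iom x (star z)
  rw [hz, inf_eq] at this
  exact this

/-- orthomodular law: `a ≤ b → a ∨ (b ∧ a*) = b` -/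
lemma om2 {a b : X} (h : ple a b) : jn a (mt b (star a)) = b := by
  have h1 : ple (star b) (star a) := ple_antitone h
  have h2 := om1 h1
  have h3 : star (mt (jn (star b) (star (star a))) (star a)) = b := by rw [h2, ss]
  rw [ss, star_mt, ss] at h3
  rw [star_jn, ss] at h3
  rw [jn_comm]
  exact h3

lemma lemB {x y : X} (h : Comm x y) : inf x y = mt x y := by
  rw [comm_iff] at h
  set a := mt x y with ha
  set b := mt x (star y) with hb
  have hby : ple b (star y) := ple_mt_right x (star y)
  have h1 : jn x (star y) = jn a (star y) := by
    rw [h, jn_assoc, hby]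
  rw [inf_eq, h1, om1 (ple_mt_right x y)]

lemma lemSym {x y : X} (h : Comm x y) : Comm y x := by
  rw [comm_iff] at h ⊢
  set a := mt x y with ha
  set b := mt x (star y) with hb
  have step1 : ple x (jn a (star y)) := by
    rw [h]; exact jn_mono_right a (ple_mt_right x (star y))
  have step2 : ple (mt (star a) y) (star x) := by
    have := ple_antitone step1
    rwa [star_jn, ss] at this
  have hz1 : ple (mt y (star a)) (mt y (star x)) :=
    mt_glb (ple_mt_left y (star a)) (by rw [mt_comm]; exact step2)
  have hz2 : ple (mt y (star x)) (mt y (star a)) :=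
    mt_mono_right y (ple_antitone (ple_mt_left x y))
  have hz : mt y (star a) = mt y (star x) := ple_antisymm hz1 hz2
  have h4 := om2 (ple_mt_right x y)
  rw [hz] at h4
  rw [mt_comm x y] at h4
  exact h4.symm

end Ioml

end IOMLAux

end Aux

open IOMLAux

theorem stmt15 {X : Type*} [IOML X] (x y : X) :
    Comm x y ↔ inf x y = inf y x := by
  constructor
  · intro h
    rw [lemB h, lemB (lemSym h), mt_comm]
  · intro h
    have hpy : ple (inf x y) y := by rw [inf_eq]; exact ple_mt_right _ y
    have hpx : ple (inf x y) x := by rw [h, inf_eq]; exact ple_mt_right _ x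
    have h1 : ple (mt x y) (inf x y) := by
      rw [inf_eq]
      exact mt_glb (ple_trans (ple_mt_left x y) (ple_jn_left x (star y))) (ple_mt_right x y)
    have h2 : ple (inf x y) (mt x y) := mt_glb hpx hpy
    have he : inf x y = mt x y := ple_antisymm h2 h1
    have heyx : inf y x = mt x y := by rw [← h, he]
    rw [comm_iff]
    have h4 := om2 (ple_mt_left x (star y))
    have hbs : star (mt x (star y)) = jn (star x) y := by rw [star_mt, ss]
    rw [hbs] at h4
    have h5 : mt x (jn (star x) y) = inf y x := by
      rw [inf_eq, mt_comm, jn_comm]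
    rw [h5, heyx] at h4
    rw [jn_comm] at h4
    exact h4.symm
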